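/- Let Φ be a block-diagonal matrix with blocks Φ₁, …, Φ_M, and let u, û be nonzero vectors with h = Φu, ĥ = Φû. Then sin∠(h, ĥ) ≤ (σ_max(Φ)/σ_min(Φ)) · √2 · sin∠(u, û), where σ_max and σ_min denote the largest and smallest singular values of Φ (assumed σ_min(Φ) > 0). -/

import Mathlib

open Matrix

/-- Euclidean norm of a finite complex vector. -/
noncomputable def vnorm {ι : Type*} [Fintype ι] (v : ι → ℂ) : ℝ :=
  Real.sqrt (∑ i, Complex.normSq (v i))

/-- Standard complex inner product, conjugate-linear in the first argument. -/
noncomputable def cip {ι : Type*} [Fintype ι] (a b : ι → ℂ) : ℂ :=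
  ∑ i, (starRingEnd ℂ) (a i) * b i

/-- Sine of the principal angle: `sin∠(a,b) = ‖P_{b⊥} a‖ / ‖a‖`. -/
noncomputable def sinAngle {ι : Type*} [Fintype ι] (a b : ι → ℂ) : ℝ :=
  vnorm (a - (cip b a / ((vnorm b ^ 2 : ℝ) : ℂ)) • b) / vnorm a

/-!
The residual of `h` after projecting onto `ĥ` is at most the residual `h - c ĥ` for the
coefficient `c` that projects `u` onto `û`. Since `Φ` is linear, `h - c ĥ = Φ (u - c û)`, whose
norm is at most `σ_max ‖u - c û‖ = σ_max ‖u‖ sin∠(u, û)`, while `‖h‖ ≥ σ_min ‖u‖`. This gives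
`sin∠(h, ĥ) ≤ (σ_max / σ_min) sin∠(u, û)`, and the factor `√2 ≥ 1` only weakens it.
-/

open scoped InnerProductSpace

theorem norm_sub_starProjection_singleton_le {𝕜 E : Type*} [RCLike 𝕜] [NormedAddCommGroup E]
    [InnerProductSpace 𝕜 E] (a b : E) (c : 𝕜) :
    ‖a - (⟪b, a⟫_𝕜 / ((‖b‖ ^ 2 : ℝ) : 𝕜)) • b‖ ≤ ‖a - c • b‖ := by
  rw [← Submodule.starProjection_singleton, Submodule.starProjection_minimal]
  exact ciInf_le (f := fun x : 𝕜 ∙ b => ‖a - (x : E)‖)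
    ⟨0, Set.forall_mem_range.2 fun _ => norm_nonneg _⟩ ⟨c • b, Submodule.smul_mem _ c (Submodule.mem_span_singleton_self b)⟩

section FiniteVectors

variable {ι κ : Type*} [Fintype ι] [Fintype κ]

theorem vnorm_eq_norm_toLp (v : ι → ℂ) : vnorm v = ‖WithLp.toLp 2 v‖ := by
  simp [vnorm, EuclideanSpace.norm_eq, ← Complex.sq_norm]

theorem cip_eq_inner_toLp (a b : ι → ℂ) : cip a b = ⟪WithLp.toLp 2 a, WithLp.toLp 2 b⟫_ℂ := by
  simp only [cip, PiLp.inner_apply, RCLike.inner_apply, mul_comm]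

theorem vnorm_nonneg (v : ι → ℂ) : 0 ≤ vnorm v :=
  Real.sqrt_nonneg _

theorem vnorm_pos {v : ι → ℂ} (hv : v ≠ 0) : 0 < vnorm v := by
  rw [vnorm_eq_norm_toLp, norm_pos_iff]
  exact fun h => hv (WithLp.toLp_injective 2 (h.trans (WithLp.toLp_zero 2).symm))

theorem sinAngle_nonneg (a b : ι → ℂ) : 0 ≤ sinAngle a b :=
  div_nonneg (vnorm_nonneg _) (vnorm_nonneg _)

theorem sinAngle_le_vnorm_sub_smul_div (a b : ι → ℂ) (c : ℂ) :
    sinAngle a b ≤ vnorm (a - c • b) / vnorm a := by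
  refine div_le_div_of_nonneg_right ?_ (vnorm_nonneg a)
  simp only [vnorm_eq_norm_toLp, cip_eq_inner_toLp, WithLp.toLp_sub, WithLp.toLp_smul]
  exact norm_sub_starProjection_singleton_le _ _ c

theorem sinAngle_mulVec_le (A : Matrix κ ι ℂ) {smax smin : ℝ} (hsmin : 0 < smin)
    (hupper : ∀ v : ι → ℂ, vnorm (A *ᵥ v) ≤ smax * vnorm v)
    (hlower : ∀ v : ι → ℂ, smin * vnorm v ≤ vnorm (A *ᵥ v))
    {u : ι → ℂ} (hu : u ≠ 0) (v : ι → ℂ) :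
    sinAngle (A *ᵥ u) (A *ᵥ v) ≤ smax / smin * sinAngle u v := by
  set w := u - (cip v u / ((vnorm v ^ 2 : ℝ) : ℂ)) • v
  have hAw : A *ᵥ u - (cip v u / ((vnorm v ^ 2 : ℝ) : ℂ)) • A *ᵥ v = A *ᵥ w := by
    rw [mulVec_sub, mulVec_smul]
  calc sinAngle (A *ᵥ u) (A *ᵥ v)
      ≤ vnorm (A *ᵥ w) / vnorm (A *ᵥ u) := hAw ▸ sinAngle_le_vnorm_sub_smul_div _ _ _
    _ ≤ smax * vnorm w / (smin * vnorm u) :=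
        div_le_div₀ ((vnorm_nonneg _).trans (hupper w)) (hupper w)
          (mul_pos hsmin (vnorm_pos hu)) (hlower u)
    _ = smax / smin * sinAngle u v := by
        rw [sinAngle, mul_div_mul_comm]

end FiniteVectors

theorem stmt10_general (M K D : ℕ)
    (Φ : Matrix (Fin K × Fin M) (Fin D × Fin M) ℂ)
    (smax smin : ℝ) (hsmin : 0 < smin)
    (hupper : ∀ v : Fin D × Fin M → ℂ, vnorm (Φ.mulVec v) ≤ smax * vnorm v)
    (hlower : ∀ v : Fin D × Fin M → ℂ, smin * vnorm v ≤ vnorm (Φ.mulVec v))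
    (u uh : Fin D × Fin M → ℂ) (hu : u ≠ 0) :
    sinAngle (Φ.mulVec u) (Φ.mulVec uh) ≤
      (smax / smin) * Real.sqrt 2 * sinAngle u uh := by
  have hkey := sinAngle_mulVec_le Φ hsmin hupper hlower hu uh
  have hbound_nonneg : 0 ≤ smax / smin * sinAngle u uh :=
    (sinAngle_nonneg _ _).trans hkey
  calc sinAngle (Φ.mulVec u) (Φ.mulVec uh)
      ≤ smax / smin * sinAngle u uh := hkey
    _ ≤ Real.sqrt 2 * (smax / smin * sinAngle u uh) :=
        le_mul_of_one_le_left hbound_nonneg Real.one_lt_sqrt_two.le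
    _ = smax / smin * Real.sqrt 2 * sinAngle u uh := by ring

/-- for a block-diagonal `Φ` with blocks `Φ₁,…,Φ_M`, nonzero `u, û`,
`h = Φu`, `ĥ = Φû`, and extreme singular values `σ_min(Φ) > 0`, `σ_max(Φ)`:
`sin∠(h, ĥ) ≤ (σ_max(Φ)/σ_min(Φ)) · √2 · sin∠(u, û)`. -/
theorem stmt10 (M K D : ℕ) (Φs : Fin M → Matrix (Fin K) (Fin D) ℂ)
    (Φ : Matrix (Fin K × Fin M) (Fin D × Fin M) ℂ)
    (hΦ : Φ = Matrix.blockDiagonal Φs)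
    (smax smin : ℝ) (hsmin : 0 < smin)
    (hupper : ∀ v : Fin D × Fin M → ℂ, vnorm (Φ.mulVec v) ≤ smax * vnorm v)
    (hlower : ∀ v : Fin D × Fin M → ℂ, smin * vnorm v ≤ vnorm (Φ.mulVec v))
    (u uh : Fin D × Fin M → ℂ) (hu : u ≠ 0) (huh : uh ≠ 0) :
    sinAngle (Φ.mulVec u) (Φ.mulVec uh) ≤
      (smax / smin) * Real.sqrt 2 * sinAngle u uh :=
  stmt10_general M K D Φ smax smin hsmin hupper hlower u uh hu
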